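/- (Proposition 1, weighted max-min fairness of IDF.) Let q* be the IDF allocation associated with an admissible (k, h). Then for every feasible allocation q' and every index i with q'_i/(Q_i ψ_i) > q*_i/(Q_i ψ_i), there exists an index j such that q'_j/(Q_j ψ_j) < q*_j/(Q_j ψ_j) and q*_j/(Q_j ψ_j) ≤ q*_i/(Q_i ψ_i). That is, increasing any user's weighted demand-normalized quota q_i/(Q_i ψ_i) above its IDF value is only possible at the cost of decreasing the weighted demand-normalized quota of some user whose IDF value is no larger. -/
import Mathlib


open Finset

/-- Proposition 1, weighted max-min fairness of IDF: if a feasible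
allocation q' raises some user i's weighted demand-normalized quota above its IDF
value, then some user j with IDF value no larger than i's gets a strictly smaller
weighted demand-normalized quota under q'. -/
theorem stmt_5 (N : ℕ) (hN : 1 ≤ N) (ψ Q : Fin N → ℝ)
    (hψ : ∀ i, 0 < ψ i) (hQpos : ∀ i, 0 < Q i)
    (Qtot : ℝ) (hQtot : 0 < Qtot)
    (hsort : ∀ i j : Fin N, i ≤ j → ψ j ≤ ψ i)
    (hexcess : Qtot < ∑ i, Q i)
    (k : ℕ) (hk : k < N)
    (h : ℝ)
    (hh : h = (Qtot - ∑ j ∈ univ.filter (fun j : Fin N => (j : ℕ) < k), Q j) /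
          (∑ j ∈ univ.filter (fun j : Fin N => k ≤ (j : ℕ)), Q j * ψ j))
    (hadm1 : 0 < k → 1 / ψ ⟨k - 1, by omega⟩ ≤ h)
    (hadm2 : h < 1 / ψ ⟨k, hk⟩)
    (qstar : Fin N → ℝ)
    (hqstar : ∀ j : Fin N, qstar j = if (j : ℕ) < k then Q j else h * Q j * ψ j)
    (q' : Fin N → ℝ)
    (hq'feas : (∀ i, 0 ≤ q' i ∧ q' i ≤ Q i) ∧ ∑ i, q' i ≤ Qtot)
    (i : Fin N)
    (hi : qstar i / (Q i * ψ i) < q' i / (Q i * ψ i)) :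
    ∃ j : Fin N, q' j / (Q j * ψ j) < qstar j / (Q j * ψ j) ∧
      qstar j / (Q j * ψ j) ≤ qstar i / (Q i * ψ i) := by
  obtain ⟨hfeas, hsum⟩ := hq'feas
  have hQψ : ∀ j : Fin N, 0 < Q j * ψ j := fun j => mul_pos (hQpos j) (hψ j)
  -- denominator positive
  have hkmem : (⟨k, hk⟩ : Fin N) ∈ univ.filter (fun j : Fin N => k ≤ (j : ℕ)) := by
    simp
  have hdenpos : 0 < ∑ j ∈ univ.filter (fun j : Fin N => k ≤ (j : ℕ)), Q j * ψ j := by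
    apply Finset.sum_pos (fun j _ => hQψ j) ⟨_, hkmem⟩
  -- i is not < k
  have hik : ¬ ((i : ℕ) < k) := by
    intro hlt
    have : qstar i = Q i := by rw [hqstar]; simp [hlt]
    have hle : q' i / (Q i * ψ i) ≤ qstar i / (Q i * ψ i) := by
      rw [this]
      exact div_le_div_of_nonneg_right (hfeas i).2 (hQψ i).le
    exact absurd hi (not_lt.mpr hle)
  -- qstar i / (Q i * ψ i) = h
  have hival : qstar i / (Q i * ψ i) = h := by
    rw [hqstar]; simp only [hik, if_false]
    rw [mul_assoc, mul_div_assoc, div_self (hQψ i).ne', mul_one]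
  -- sum of qstar is Qtot
  have hstarsum : ∑ j, qstar j = Qtot := by
    have hsplit := Finset.sum_filter_add_sum_filter_not Finset.univ
      (fun j : Fin N => (j : ℕ) < k) qstar
    have h1 : ∑ j ∈ univ.filter (fun j : Fin N => (j : ℕ) < k), qstar j
        = ∑ j ∈ univ.filter (fun j : Fin N => (j : ℕ) < k), Q j := by
      apply Finset.sum_congr rfl
      intro j hj
      rw [hqstar]
      simp only [Finset.mem_filter] at hj
      simp [hj.2]
    have h2 : ∑ j ∈ univ.filter (fun j : Fin N => ¬ (j : ℕ) < k), qstar j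
        = h * ∑ j ∈ univ.filter (fun j : Fin N => k ≤ (j : ℕ)), Q j * ψ j := by
      rw [Finset.mul_sum]
      have : univ.filter (fun j : Fin N => ¬ (j : ℕ) < k)
          = univ.filter (fun j : Fin N => k ≤ (j : ℕ)) := by
        apply Finset.filter_congr; intro j _; simp [not_lt]
      rw [this]
      apply Finset.sum_congr rfl
      intro j hj
      simp only [Finset.mem_filter] at hj
      rw [hqstar]
      simp [not_lt.mpr hj.2, mul_assoc]
    rw [← hsplit, h1, h2, hh, div_mul_cancel₀ _ hdenpos.ne']
    ring
  -- main contradiction argument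
  by_contra hcon
  push_neg at hcon
  have hall : ∀ j : Fin N, qstar j ≤ q' j := by
    intro j
    have hle : qstar j / (Q j * ψ j) ≤ h := by
      rw [hqstar]
      by_cases hjk : (j : ℕ) < k
      · simp only [hjk, if_true]
        have hk0 : 0 < k := Nat.pos_of_ne_zero (by omega)
        have hψle : ψ ⟨k - 1, by omega⟩ ≤ ψ j := by
          apply hsort
          simp only [Fin.le_def]
          omega
        calc Q j / (Q j * ψ j) = 1 / ψ j := by
              have h1 := (hQpos j).ne'
              have h2 := (hψ j).ne'
              field_simp
          _ ≤ 1 / ψ ⟨k - 1, by omega⟩ :=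
              one_div_le_one_div_of_le (hψ _) hψle
          _ ≤ h := hadm1 hk0
      · simp only [hjk, if_false]
        rw [mul_assoc, mul_div_assoc, div_self (hQψ j).ne', mul_one]
    have hB : qstar j / (Q j * ψ j) ≤ qstar i / (Q i * ψ i) := hle.trans_eq hival.symm
    have hnot : ¬ (q' j / (Q j * ψ j) < qstar j / (Q j * ψ j)) :=
      fun hA => absurd hB (not_le.mpr (hcon j hA))
    have := not_lt.mp hnot
    rwa [div_le_div_iff_of_pos_right (hQψ j)] at this
  have hstrict : qstar i < q' i := by
    have := hi
    rw [div_lt_div_iff_of_pos_right (hQψ i)] at this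
    exact this
  have : ∑ j, qstar j < ∑ j, q' j :=
    Finset.sum_lt_sum (fun j _ => hall j) ⟨i, Finset.mem_univ i, hstrict⟩
  rw [hstarsum] at this
  linarith
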